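/- Let Q ∈ Sp(2) with a = Q₀₀ = a₁·i + a₂·j and b = Q₀₁ = b₀ + b₁·i for real numbers a₁, a₂, b₀, b₁ (so Re(a) = 0). For a purely imaginary quaternion x define ξ(x) := [[ā·x·a − x, ā·x·b], [b̄·x·a, b̄·x·b − x]] with components y(x) = ā·x·b and z(x) = b̄·x·b − x, and define the Hessian form (of F at Q, where Re(a) = 0) by H(ξ, η) := −( Re( conj(b·z_ξ)·y_η ) + Re( conj( Im( b̄·y_ξ ) )·z_η ) ). Then H(ξ(i), ξ(i)) = 0, H(ξ(j), ξ(j)) = H(ξ(k), ξ(k)) = −4a₁b₁b₀, and H(ξ(i), ξ(j)) = 2a₂b₁b₀. -/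

import Mathlib

noncomputable section
open Matrix

/-- The real quaternions. -/
abbrev H : Type := Quaternion ℝ

/-- The quaternion unit `i`. -/
def qi : H := ⟨0, 1, 0, 0⟩
/-- The quaternion unit `j`. -/
def qj : H := ⟨0, 0, 1, 0⟩
/-- The quaternion unit `k`. -/
def qk : H := ⟨0, 0, 0, 1⟩

/-- `Sp(2)`, the quaternionic unitary group `{Q | Q Qᴴ = 1}`. -/
def Sp2 : Set (Matrix (Fin 2) (Fin 2) H) := {Q | Q * Qᴴ = 1}

/-- For a purely imaginary quaternion `x`,
`ξ(x) = [[ā·x·a − x, ā·x·b], [b̄·x·a, b̄·x·b − x]]`. -/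
def xiM (a b x : H) : Matrix (Fin 2) (Fin 2) H :=
  !![star a * x * a - x, star a * x * b;
     star b * x * a, star b * x * b - x]

/-- The Hessian form of `F(Q) = Re Q₀₀` at a point with `Re Q₀₀ = 0`, `b = Q₀₁`,
on matrices `ξ = [[x_ξ, y_ξ], [−ȳ_ξ, z_ξ]]`:
`H(ξ, η) = −( Re(conj(b·z_ξ)·y_η) + Re(conj(Im(b̄·y_ξ))·z_η) )`. -/
def Hform (b : H) (ξ η : Matrix (Fin 2) (Fin 2) H) : ℝ :=
  -((star (b * ξ 1 1) * η 0 1).re + (star ((star b * ξ 0 1).im) * η 1 1).re)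

lemma Hform_xiM (a b x y : H) :
    Hform b (xiM a b x) (xiM a b y) =
      -((star (b * (star b * x * b - x)) * (star a * y * b)).re +
        (star ((star b * (star a * x * b)).im) * (star b * y * b - y)).re) := by
  simp [Hform, xiM]

/-- At a point of `Sp(2)` in the normal form
`a = a₁ i + a₂ j`, `b = b₀ + b₁ i` (so `Re a = 0`), the Hessian form on the
Gromoll–Meyer orbit frame `ξ(i), ξ(j), ξ(k)` satisfies `H(ξ(i),ξ(i)) = 0`,
`H(ξ(j),ξ(j)) = H(ξ(k),ξ(k)) = −4a₁b₁b₀` and `H(ξ(i),ξ(j)) = 2a₂b₁b₀`. -/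
theorem hessian_on_GM_orbit_frame (Q : Matrix (Fin 2) (Fin 2) H) (hQ : Q ∈ Sp2)
    (a₁ a₂ b₀ b₁ : ℝ)
    (ha : Q 0 0 = ⟨0, a₁, a₂, 0⟩) (hb : Q 0 1 = ⟨b₀, b₁, 0, 0⟩) :
    let a : H := Q 0 0
    let b : H := Q 0 1
    Hform b (xiM a b qi) (xiM a b qi) = 0 ∧
    Hform b (xiM a b qj) (xiM a b qj) = -4 * a₁ * b₁ * b₀ ∧
    Hform b (xiM a b qk) (xiM a b qk) = -4 * a₁ * b₁ * b₀ ∧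
    Hform b (xiM a b qi) (xiM a b qj) = 2 * a₂ * b₁ * b₀ := by
  intro a b
  have ha' : a = (⟨0, a₁, a₂, 0⟩ : H) := ha
  have hb' : b = (⟨b₀, b₁, 0, 0⟩ : H) := hb
  refine ⟨?_, ?_, ?_, ?_⟩ <;>
  · rw [Hform_xiM]
    simp only [Quaternion.ext_iff, Quaternion.re_mul, Quaternion.imI_mul,
      Quaternion.imJ_mul, Quaternion.imK_mul, Quaternion.re_sub,
      Quaternion.imI_sub, Quaternion.imJ_sub, Quaternion.imK_sub,
      Quaternion.re_star, Quaternion.imI_star, Quaternion.imJ_star,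
      Quaternion.imK_star, Quaternion.re_im, Quaternion.imI_im,
      Quaternion.imJ_im, Quaternion.imK_im]
    simp only [ha', hb', qi, qj, qk]
    ring
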